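/- The functionals {β_c : c a chord diagram on {1,...,2N}} are linearly independent as elements of ((V_n)^{⊗2N})* whenever n ≥ N. -/

import Mathlib

structure ChordDiagram (N : ℕ) where
  pair : Fin N → Fin (2 * N) × Fin (2 * N)
  bij : Function.Bijective
    (fun p : Fin N × Bool => if p.2 then (pair p.1).1 else (pair p.1).2)

def ChordDiagram.toPairset {N : ℕ} (c : ChordDiagram N) : Finset (Finset (Fin (2 * N))) :=
  Finset.image (fun r => ({(c.pair r).1, (c.pair r).2} : Finset (Fin (2 * N)))) Finset.univ

/-- `β_c(v₁ ⊗ ⋯ ⊗ v_{2N}) = ∏_r ⟨v_{i_r}, v_{j_r}⟩`, as a (multilinear) functional on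
tuples of vectors of `V_n = K^n`; a linear combination of the `β_c` vanishes as an
element of `((V_n)^{⊗2N})*` iff it vanishes on all such tuples. -/
def betaFun {K : Type*} [Field K] {N n : ℕ} (c : ChordDiagram N)
    (v : Fin (2 * N) → (Fin n → K)) : K :=
  ∏ r : Fin N, ∑ i : Fin n, v (c.pair r).1 i * v (c.pair r).2 i

/-! Color the points `1, …, 2N` by the chord of `c` they lie on and send a point of color `r`
to the basis vector `x_r` (possible as `n ≥ N`). A factor `⟨v_i, v_j⟩` of `β_{c'}` on this tuple
is `1` if `i, j` have the same color and `0` otherwise, so `β_{c'}` takes the value `1` if every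
chord of `c'` is a chord of `c`, i.e. if `c'` and `c` have the same chords, and `0` otherwise.
The tuples attached to the diagrams thus form a family of points biorthogonal to the `β_c`. -/

theorem linearIndependent_of_apply_eq_single {R X ι : Type*} [Semiring R] [DecidableEq ι]
    (f : ι → X → R) (x : ι → X) (h : ∀ i j, f j (x i) = (Pi.single j (1 : R) : ι → R) i) :
    LinearIndependent R f := by
  refine LinearIndependent.of_comp (LinearMap.funLeft R R x) ?_
  convert Pi.linearIndependent_single_one ι R with j
  ext i
  exact h i j

namespace ChordDiagram

variable {N : ℕ} (c c' : ChordDiagram N)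

noncomputable def equiv : Fin N × Bool ≃ Fin (2 * N) :=
  Equiv.ofBijective _ c.bij

def chord (r : Fin N) : Finset (Fin (2 * N)) :=
  {(c.pair r).1, (c.pair r).2}

noncomputable def color (k : Fin (2 * N)) : Fin N :=
  (c.equiv.symm k).1

theorem chord_eq (r : Fin N) : c.chord r = {c.equiv (r, true), c.equiv (r, false)} := rfl

theorem mem_chord_iff {k : Fin (2 * N)} {r : Fin N} : k ∈ c.chord r ↔ c.color k = r := by
  obtain ⟨⟨s, b⟩, rfl⟩ := c.equiv.surjective k
  cases b <;> simp [chord_eq, color, c.equiv.injective.eq_iff, eq_comm]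

theorem color_fst (r : Fin N) : c.color (c.pair r).1 = r :=
  (c.mem_chord_iff).1 (by simp [chord])

theorem card_chord (r : Fin N) : (c.chord r).card = 2 :=
  Finset.card_pair fun h => by simpa using c.equiv.injective (a₁ := (r, true)) (a₂ := (r, false)) h

theorem chord_injective : Function.Injective c.chord := fun r s h => by
  have hs : (c.pair r).1 ∈ c.chord s := h ▸ by simp [chord]
  rwa [c.mem_chord_iff, c.color_fst] at hs

theorem toPairset_eq : c.toPairset = Finset.univ.image c.chord := rfl

theorem card_toPairset : c.toPairset.card = N := by
  rw [toPairset_eq, Finset.card_image_of_injective _ c.chord_injective, Finset.card_univ,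
    Fintype.card_fin]

theorem chord_mem_toPairset_iff (r : Fin N) :
    c'.chord r ∈ c.toPairset ↔ c.color (c'.pair r).1 = c.color (c'.pair r).2 := by
  constructor
  · intro hr
    obtain ⟨s, -, hs⟩ := Finset.mem_image.1 (c.toPairset_eq ▸ hr)
    have hmem : ∀ k ∈ c'.chord r, c.color k = s := fun k hk => c.mem_chord_iff.1 (hs ▸ hk)
    rw [hmem _ (by simp [chord]), hmem _ (by simp [chord])]
  · intro hr
    -- `c'.chord r` lies in the chord of `c` of its color, and both have two points
    have hsub : c'.chord r ⊆ c.chord (c.color (c'.pair r).1) := by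
      intro k hk
      rw [c.mem_chord_iff]
      rcases Finset.mem_insert.1 hk with rfl | hk
      · rfl
      · rw [Finset.mem_singleton.1 hk, hr]
    rw [Finset.eq_of_subset_of_card_le hsub (by rw [card_chord, card_chord]), toPairset_eq]
    exact Finset.mem_image_of_mem _ (Finset.mem_univ _)

theorem toPairset_eq_iff :
    c'.toPairset = c.toPairset ↔ ∀ r, c.color (c'.pair r).1 = c.color (c'.pair r).2 := by
  rw [← Finset.subset_iff_eq_of_card_le (by rw [card_toPairset, card_toPairset]),
    c'.toPairset_eq, Finset.image_subset_iff]
  simp only [Finset.mem_univ, true_implies, chord_mem_toPairset_iff]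

noncomputable def testTuple {K : Type*} [Semiring K] {n : ℕ} (e : Fin N ↪ Fin n) :
    Fin (2 * N) → Fin n → K :=
  fun k => Pi.single (e (c.color k)) 1

theorem betaFun_testTuple {K : Type*} [Field K] {n : ℕ} (e : Fin N ↪ Fin n) :
    betaFun c' (c.testTuple (K := K) e) = if c'.toPairset = c.toPairset then 1 else 0 := by
  have hfactor (a b : Fin N) :
      ∑ i, (Pi.single (e a) 1 : Fin n → K) i * (Pi.single (e b) 1 : Fin n → K) i =
        if a = b then 1 else 0 := by
    rw [← dotProduct.eq_1, dotProduct_single, mul_one]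
    simp only [Pi.single_apply, e.injective.eq_iff, eq_comm]
  simp [betaFun, testTuple, hfactor, Fintype.prod_boole, toPairset_eq_iff c c']

end ChordDiagram

theorem stmt_4_general {K : Type*} [Field K] {N n : ℕ} (hn : N ≤ n)
    {ι : Type*} (cd : ι → ChordDiagram N)
    (hinj : Function.Injective (fun a => (cd a).toPairset)) :
    LinearIndependent K
      (fun a : ι => (betaFun (cd a) : (Fin (2 * N) → (Fin n → K)) → K)) := by
  classical
  refine linearIndependent_of_apply_eq_single _ (fun i => (cd i).testTuple (Fin.castLEEmb hn)) ?_
  intro i j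
  rw [ChordDiagram.betaFun_testTuple, Pi.single_apply]
  exact if_congr (hinj.eq_iff.trans eq_comm) rfl rfl

/-- the functionals `β_c`, for pairwise distinct chord diagrams `c` on
`{1,…,2N}`, are linearly independent whenever `n ≥ N`. -/
theorem stmt_4 {K : Type*} [Field K] [CharZero K] {N n : ℕ} (hn : N ≤ n)
    {ι : Type*} (cd : ι → ChordDiagram N)
    (hinj : Function.Injective (fun a => (cd a).toPairset)) :
    LinearIndependent K
      (fun a : ι => (betaFun (cd a) : (Fin (2 * N) → (Fin n → K)) → K)) :=
  stmt_4_general hn cd hinj
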